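/- If a twirling set S makes all off-diagonal scaling factors vanish on row φ(r), then the twirled noisy expectation is an exact rescaling of the ideal one: suppose for all j ≠ φ(r), α_{φ(r) j}(S)·[R]_{φ(r) j} = 0. Then for every n-qubit density matrix ρ, the twirled value v(ρ) = 2^n Σ_j α_{φ(r) j}(S)[R]_{φ(r) j} ϱ_j(ρ) equals [R]_{φ(r)φ(r)}·Tr(ρ Z_r); and if additionally [R]_{φ(r)φ(r)} ≠ 0, then v(ρ)/v(ρ₀) = Tr(ρ Z_r), where ρ₀ = |0⟩⟨0|^{⊗n}. -/
import Mathlib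

open Matrix ComplexOrder

/-- The single-qubit Pauli matrices I, X, Y, Z, indexed by 0,1,2,3. -/
noncomputable def pauli1 : Fin 4 → Matrix (Fin 2) (Fin 2) ℂ :=
  ![1, !![0, 1; 1, 0], !![0, -Complex.I; Complex.I, 0], !![1, 0; 0, -1]]

/-- The n-qubit Pauli operator P_p = ⊗_i σ_{p_i} on (ℂ²)^{⊗n}, with basis
states indexed by bit strings Fin n → Fin 2. -/
noncomputable def pauliN (n : ℕ) (p : Fin n → Fin 4) :
    Matrix (Fin n → Fin 2) (Fin n → Fin 2) ℂ :=
  Matrix.of fun x y => ∏ i, pauli1 (p i) (x i) (y i)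

/-- if a twirling set S makes all off-diagonal scaling factors
vanish on row φ(r) (α_{φ(r)j}·[R]_{φ(r)j} = 0 for j ≠ φ(r), with
α_{φ(r)φ(r)} = 1), then for every density matrix ρ the twirled value
v(ρ) = 2^n Σ_j α_{φ(r)j}[R]_{φ(r)j} ϱ_j(ρ), with ϱ_j(ρ) = (1/2^n)Tr(ρ P_j),
equals [R]_{φ(r)φ(r)}·Tr(ρ Z_r); and if [R]_{φ(r)φ(r)} ≠ 0 then
v(ρ)/v(ρ₀) = Tr(ρ Z_r), where ρ₀ = |0⟩⟨0|^{⊗n}. Here Z_r = P_{φ(r)} where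
the label φ(r) has digit 3 (i.e. Z) exactly where the bit string r is 1. -/
theorem exact_mitigation_under_perfect_twirling (n : ℕ) (r : Fin n → Fin 2)
    (R α : (Fin n → Fin 4) → (Fin n → Fin 4) → ℂ)
    (zr : Fin n → Fin 4)
    (hzr : zr = fun i => if r i = 1 then (3 : Fin 4) else 0)
    (hα : α zr zr = 1)
    (hoff : ∀ j, j ≠ zr → α zr j * R zr j = 0)
    (ρ : Matrix (Fin n → Fin 2) (Fin n → Fin 2) ℂ)
    (hρ : ρ.PosSemidef) (hρtr : ρ.trace = 1)
    (v : Matrix (Fin n → Fin 2) (Fin n → Fin 2) ℂ → ℂ)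
    (hv : ∀ σ, v σ = 2 ^ n * ∑ j : Fin n → Fin 4,
      α zr j * R zr j * ((1 / (2 ^ n : ℂ)) * (σ * pauliN n j).trace))
    (ρ0 : Matrix (Fin n → Fin 2) (Fin n → Fin 2) ℂ)
    (hρ0 : ρ0 = Matrix.of fun x y =>
      if x = (fun _ => 0) ∧ y = (fun _ => 0) then 1 else 0) :
    v ρ = R zr zr * (ρ * pauliN n zr).trace ∧
      (R zr zr ≠ 0 → v ρ / v ρ0 = (ρ * pauliN n zr).trace) := by
  have h2n : (2 : ℂ) ^ n ≠ 0 := pow_ne_zero _ two_ne_zero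
  have key : ∀ σ : Matrix (Fin n → Fin 2) (Fin n → Fin 2) ℂ,
      v σ = R zr zr * (σ * pauliN n zr).trace := by
    intro σ
    rw [hv]
    rw [Finset.sum_eq_single zr]
    · rw [hα]; field_simp
    · intro j _ hj
      rw [hoff j hj, zero_mul]
    · intro h; exact absurd (Finset.mem_univ zr) h
  have htr0 : (ρ0 * pauliN n zr).trace = 1 := by
    subst hρ0
    simp only [Matrix.trace, Matrix.diag, Matrix.mul_apply, Matrix.of_apply]
    rw [Finset.sum_eq_single (fun _ => (0 : Fin 2))]
    · rw [Finset.sum_eq_single (fun _ => (0 : Fin 2))]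
      · simp only [and_self, if_pos rfl, if_true, one_mul, pauliN, Matrix.of_apply]
        subst hzr
        apply Finset.prod_eq_one
        intro i _
        by_cases h : r i = 1 <;> simp [h, pauli1]
      · intro y _ hy
        rw [if_neg (by simp [hy]), zero_mul]
      · intro h; exact absurd (Finset.mem_univ _) h
    · intro x _ hx
      apply Finset.sum_eq_zero
      intro y _
      rw [if_neg (by simp [hx]), zero_mul]
    · intro h; exact absurd (Finset.mem_univ _) h
  refine ⟨key ρ, fun hR => ?_⟩
  rw [key ρ, key ρ0, htr0, mul_one]
  field_simp
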